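/- arXiv:1612.03054 — 9 statements merged into one kernel-verified Lean document; each statement's English description precedes it below -/
import Mathlib

section
/- For every fixed integer k ≥ 1 there exist a constant c > 0 and an integer n₀ such that for all n ≥ n₀, log S_k(n) ≥ c · n · log n, where S_k(n) is the number of k-degenerate simple graphs on the labeled vertex set Fin n. (Lower-bound half of Theorem 1.) -/
/-!
Letting each vertex `i` of `Fin n` choose a parent among `0, …, i` (choosing `i` itself makes it
a root) yields `n!` distinct forests. Each is `1`-degenerate, since the largest vertex of any set
`S` is adjacent inside `S` to its parent at most, so `S_k(n) ≥ n!` for `k ≥ 1`, and Stirling's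
bound gives `log n! ≥ (n log n) / 2` once `log n ≥ 2`.
-/

/-- A simple graph `G` is `k`-degenerate if every nonempty induced subgraph has a
vertex of degree at most `k`: for every nonempty finite set `S` of vertices there is
a vertex `v ∈ S` adjacent to at most `k` other vertices of `S`. -/
def IsKDegenerate {V : Type*} (k : ℕ) (G : SimpleGraph V) : Prop :=
  ∀ S : Finset V, S.Nonempty → ∃ v ∈ S, {w ∈ (S : Set V) | G.Adj v w}.ncard ≤ k

/-- `numKDegenerate k n` (denoted `S_k(n)` in the paper) is the number of
`k`-degenerate simple graphs on the labeled vertex set `Fin n`. -/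
noncomputable def numKDegenerate (k n : ℕ) : ℕ :=
  Nat.card {G : SimpleGraph (Fin n) // IsKDegenerate k G}

open Real
open scoped Nat

theorem IsKDegenerate.mono {V : Type*} {k l : ℕ} {G : SimpleGraph V} (hkl : k ≤ l)
    (hG : IsKDegenerate k G) : IsKDegenerate l G := fun S hS =>
  (hG S hS).imp fun _ ⟨hv, hdeg⟩ => ⟨hv, hdeg.trans hkl⟩

section ForestOfParents

variable {n : ℕ} (f : ∀ i : Fin n, Fin (i + 1))

def parentOf (i : Fin n) : Fin n := Fin.castLE i.isLt (f i)

theorem parentOf_le (i : Fin n) : parentOf f i ≤ i :=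
  Fin.le_iff_val_le_val.mpr (Nat.lt_succ_iff.mp (f i).isLt)

def forestOfParents : SimpleGraph (Fin n) :=
  SimpleGraph.fromRel fun i j => j = parentOf f i

theorem forestOfParents_adj_of_lt {i j : Fin n} (hji : j < i) :
    (forestOfParents f).Adj i j ↔ j = parentOf f i := by
  have not_parent : i ≠ parentOf f j := fun h => (h ▸ parentOf_le f j).not_gt hji
  simp [forestOfParents, SimpleGraph.fromRel_adj, hji.ne', not_parent]

theorem isKDegenerate_one_forestOfParents : IsKDegenerate 1 (forestOfParents f) := by
  intro S hS
  refine ⟨S.max' hS, S.max'_mem hS, ?_⟩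
  have neighbours_sub : {w ∈ (S : Set (Fin n)) | (forestOfParents f).Adj (S.max' hS) w} ⊆
      {parentOf f (S.max' hS)} := by
    rintro w ⟨hwS, hadj⟩
    have hlt : w < S.max' hS := (S.le_max' w hwS).lt_of_ne hadj.ne'
    exact (forestOfParents_adj_of_lt f hlt).mp hadj
  simpa using Set.ncard_le_ncard neighbours_sub

end ForestOfParents

theorem forestOfParents_injective {n : ℕ} : Function.Injective (forestOfParents (n := n)) := by
  intro f f' hff'
  have parent_eq_of_lt : ∀ {g g'}, forestOfParents g = forestOfParents g' → ∀ i : Fin n,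
      parentOf g i < i → parentOf g i = parentOf g' i := fun hgg' i hlt =>
    (forestOfParents_adj_of_lt _ hlt).mp (hgg' ▸ (forestOfParents_adj_of_lt _ hlt).mpr rfl)
  funext i
  apply Fin.castLE_injective i.isLt
  change parentOf f i = parentOf f' i
  rcases (parentOf_le f i).lt_or_eq with hlt | heq
  · exact parent_eq_of_lt hff' i hlt
  rcases (parentOf_le f' i).lt_or_eq with hlt' | heq'
  · exact (parent_eq_of_lt hff'.symm i hlt').symm
  · rw [heq, heq']

theorem card_parentFunctions (n : ℕ) : Nat.card (∀ i : Fin n, Fin (i + 1)) = n ! := by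
  rw [Nat.card_pi]
  simp only [Nat.card_eq_fintype_card, Fintype.card_fin]
  rw [Fin.prod_univ_eq_prod_range (· + 1), Finset.prod_range_add_one_eq_factorial]

theorem factorial_le_numKDegenerate {k : ℕ} (hk : 1 ≤ k) (n : ℕ) :
    n ! ≤ numKDegenerate k n := by
  rw [← card_parentFunctions, numKDegenerate]
  exact Nat.card_le_card_of_injective
    (fun f => ⟨forestOfParents f, (isKDegenerate_one_forestOfParents f).mono hk⟩)
    fun f f' h => forestOfParents_injective (congrArg Subtype.val h)

theorem half_mul_log_le_log_factorial {n : ℕ} (hn : exp 2 ≤ n) :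
    n * log n / 2 ≤ log n ! := by
  have hn_pos : (0 : ℝ) < n := (exp_pos 2).trans_le hn
  have two_le_log : 2 ≤ log n := (le_log_iff_exp_le hn_pos).mpr hn
  have log_two_pi_nonneg : 0 ≤ log (2 * π) := log_nonneg (by nlinarith [pi_gt_three])
  have stirling := Stirling.le_log_factorial_stirling (Nat.cast_pos.mp hn_pos).ne'
  nlinarith

/-- Lower-bound half of Theorem 1: for every fixed `k ≥ 1` there are `c > 0` and `n₀`
such that `log S_k(n) ≥ c · n · log n` for all `n ≥ n₀`. -/
theorem log_numKDegenerate_lower_bound (k : ℕ) (hk : 1 ≤ k) :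
    ∃ c : ℝ, 0 < c ∧ ∃ n₀ : ℕ, ∀ n : ℕ, n₀ ≤ n →
      c * n * Real.log n ≤ Real.log (numKDegenerate k n) := by
  refine ⟨1 / 2, by norm_num, ⌈exp 2⌉₊, fun n hn => ?_⟩
  calc 1 / 2 * n * log n = n * log n / 2 := by ring
    _ ≤ log n ! := half_mul_log_le_log_factorial (Nat.ceil_le.mp hn)
    _ ≤ log (numKDegenerate k n) :=
      log_le_log (by positivity) (by exact_mod_cast factorial_le_numKDegenerate hk n)
end

section
/- For all natural numbers n ≥ 1 and k, the number of simple graphs G on the labeled vertex set Fin n with the property that every vertex i has at most k neighbors j with j > i (well-ordered graphs) equals the product over r = 1, …, n−1 of Σ_{i=0}^{min(r,k)} C(r,i), where C(r,i) is the binomial coefficient. -/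
/-- A simple graph `G` on `Fin n` is well-ordered with parameter `k` if every vertex
`i` has at most `k` neighbors `j` with `j > i` in the natural order of `Fin n`. -/
def IsWellOrdered {n : ℕ} (k : ℕ) (G : SimpleGraph (Fin n)) : Prop :=
  ∀ i : Fin n, {j : Fin n | G.Adj i j ∧ i < j}.ncard ≤ k

/-!
A graph on a linearly ordered vertex set is the same as an independent choice, for every
vertex `i`, of its set of neighbours above `i`, an arbitrary subset of `Ioi i`. Being
well-ordered bounds each of these sets by `k` independently, so the count factors over
the vertices; vertex `i` of `Fin n` contributes `∑_{t ≤ k} C(n - 1 - i, t)`.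
-/

open Finset

namespace SimpleGraph

variable {V : Type*} [LinearOrder V] [LocallyFiniteOrderTop V]

open scoped Classical in
noncomputable def equivUpperNeighborFinsets :
    SimpleGraph V ≃ ∀ i : V, {s : Finset V // s ⊆ Ioi i} where
  toFun G i := ⟨{j ∈ Ioi i | G.Adj i j}, filter_subset _ _⟩
  invFun f := fromRel fun i j => j ∈ (f i).1
  left_inv G := by
    ext i j
    simp only [fromRel_adj, mem_filter, mem_Ioi]
    constructor
    · rintro ⟨-, ⟨-, h⟩ | ⟨-, h⟩⟩
      exacts [h, h.symm]
    · intro h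
      rcases (G.ne_of_adj h).lt_or_gt with hij | hij
      exacts [⟨hij.ne, .inl ⟨hij, h⟩⟩, ⟨hij.ne', .inr ⟨hij, h.symm⟩⟩]
  right_inv f := by
    funext i
    ext j
    simp only [fromRel_adj, mem_filter, mem_Ioi]
    constructor
    · rintro ⟨hij, -, hj | hi⟩
      exacts [hj, absurd (mem_Ioi.mp ((f j).2 hi)) hij.not_gt]
    · intro hj
      have hij := mem_Ioi.mp ((f i).2 hj)
      exact ⟨hij, hij.ne, .inl hj⟩

theorem mem_equivUpperNeighborFinsets {G : SimpleGraph V} {i j : V} :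
    j ∈ (equivUpperNeighborFinsets G i).1 ↔ i < j ∧ G.Adj i j := by
  simp [equivUpperNeighborFinsets]

theorem card_equivUpperNeighborFinsets (G : SimpleGraph V) (i : V) :
    #(equivUpperNeighborFinsets G i).1 = {j | G.Adj i j ∧ i < j}.ncard := by
  rw [← Set.ncard_coe_finset]
  congr 1
  ext j
  simp [mem_equivUpperNeighborFinsets, and_comm]

end SimpleGraph

theorem isWellOrdered_iff_card_equivUpperNeighborFinsets_le {n k : ℕ} {G : SimpleGraph (Fin n)} :
    IsWellOrdered k G ↔ ∀ i, #(G.equivUpperNeighborFinsets i).1 ≤ k := by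
  simp only [IsWellOrdered, SimpleGraph.card_equivUpperNeighborFinsets]

theorem Finset.card_filter_powerset_card_le {α : Type*} (A : Finset α) (k : ℕ) :
    #{s ∈ A.powerset | #s ≤ k} = ∑ t ∈ range (k + 1), (#A).choose t := by
  classical
  rw [card_eq_sum_card_fiberwise (f := card) (t := range (k + 1))]
  · refine sum_congr rfl fun t ht => ?_
    rw [filter_filter, ← card_powersetCard, powersetCard_eq_filter]
    congr 1
    refine filter_congr fun s _ => ?_
    simp only [mem_range] at ht
    omega
  · intro s hs
    simp only [coe_filter, mem_powerset, Set.mem_ofPred_eq, coe_range, Set.mem_Iio] at hs ⊢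
    omega

theorem card_subtype_subset_card_le {α : Type*} (A : Finset α) (k : ℕ) :
    Nat.card {s : {s : Finset α // s ⊆ A} // #s.1 ≤ k} =
      ∑ t ∈ range (k + 1), (#A).choose t := by
  rw [← card_filter_powerset_card_le, ← Nat.card_eq_finsetCard,
    Nat.card_congr (Equiv.subtypeSubtypeEquivSubtypeInter (· ⊆ A) fun s => #s ≤ k)]
  simp

theorem sum_range_min_choose (r k : ℕ) :
    ∑ i ∈ range (min r k + 1), r.choose i = ∑ i ∈ range (k + 1), r.choose i := by
  refine sum_subset (fun i hi => ?_) fun i hi hi' => ?_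
  · simp only [mem_range] at hi ⊢; omega
  · simp only [mem_range] at hi hi'
    exact Nat.choose_eq_zero_of_lt (by omega)

theorem Fin.prod_univ_sub_eq_prod_Icc {M : Type*} [CommMonoid M] {f : ℕ → M} (hf : f 0 = 1)
    (n : ℕ) :
    ∏ i : Fin n, f (n - 1 - i) = ∏ r ∈ Icc 1 (n - 1), f r := by
  rw [Fin.prod_univ_eq_prod_range (fun i => f (n - 1 - i)), prod_range_reflect f n]
  refine (prod_subset (fun r hr => ?_) fun r hr hr' => ?_).symm
  · simp only [mem_Icc, mem_range] at hr ⊢; omega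
  · obtain rfl : r = 0 := by simp only [mem_Icc, mem_range] at hr hr'; omega
    exact hf

theorem card_wellOrdered_general (n k : ℕ) :
    Nat.card {G : SimpleGraph (Fin n) // IsWellOrdered k G} =
      ∏ r ∈ Finset.Icc 1 (n - 1), ∑ i ∈ Finset.range (min r k + 1), r.choose i := by
  have e : {G // IsWellOrdered k G} ≃ ∀ i : Fin n, {s : {s // s ⊆ Ioi i} // #s.1 ≤ k} :=
    (SimpleGraph.equivUpperNeighborFinsets.subtypeEquiv fun _ =>
      isWellOrdered_iff_card_equivUpperNeighborFinsets_le).trans Equiv.subtypePiEquivPi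
  rw [Nat.card_congr e, Nat.card_pi]
  simp only [card_subtype_subset_card_le, Fin.card_Ioi]
  rw [Fin.prod_univ_sub_eq_prod_Icc (f := fun r => ∑ i ∈ range (k + 1), r.choose i)
    (by simp [sum_range_succ'])]
  exact prod_congr rfl fun r _ => (sum_range_min_choose r k).symm

/-- The number of well-ordered graphs with parameter `k` on the labeled vertex set
`Fin n` equals `∏_{r=1}^{n-1} Σ_{i=0}^{min(r,k)} C(r,i)`. -/
theorem card_wellOrdered (n k : ℕ) (hn : 1 ≤ n) :
    Nat.card {G : SimpleGraph (Fin n) // IsWellOrdered k G} =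
      ∏ r ∈ Finset.Icc 1 (n - 1), ∑ i ∈ Finset.range (min r k + 1), r.choose i :=
  card_wellOrdered_general n k
end

section
/- For all natural numbers n ≥ 1 and k, the number S_k(n) of k-degenerate simple graphs on the labeled vertex set Fin n satisfies S_k(n) ≥ ∏_{r=1}^{n−1} Σ_{i=0}^{min(r,k)} C(r,i). -/
-- domain type
abbrev DegChoice (k n : ℕ) := ∀ r : Fin n, {A : Finset (Fin n) // A ⊆ Finset.Iio r ∧ A.card ≤ k}

noncomputable def toGraph {k n : ℕ} (f : DegChoice k n) : SimpleGraph (Fin n) :=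
  SimpleGraph.fromRel (fun v w => w ∈ (f v).1)

lemma toGraph_adj_iff {k n : ℕ} (f : DegChoice k n) (v w : Fin n) (hw : w < v) :
    (toGraph f).Adj v w ↔ w ∈ (f v).1 := by
  simp only [toGraph, SimpleGraph.fromRel_adj]
  constructor
  · rintro ⟨-, h | h⟩
    · exact h
    · exact absurd ((f w).2.1 h) (by simp [Finset.mem_Iio, not_lt.2 hw.le])
  · intro h
    exact ⟨hw.ne', Or.inl h⟩

lemma toGraph_degenerate {k n : ℕ} (f : DegChoice k n) : IsKDegenerate k (toGraph f) := by
  intro S hS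
  refine ⟨S.max' hS, S.max'_mem hS, ?_⟩
  have hsub : {w ∈ (S : Set (Fin n)) | (toGraph f).Adj (S.max' hS) w}
      ⊆ ↑(f (S.max' hS)).1 := by
    rintro w ⟨hwS, hadj⟩
    have hlt : w < S.max' hS := lt_of_le_of_ne (S.le_max' w hwS) (fun h => hadj.ne' h)
    exact (toGraph_adj_iff f _ w hlt).1 hadj
  calc {w ∈ (S : Set (Fin n)) | (toGraph f).Adj (S.max' hS) w}.ncard
      ≤ (↑(f (S.max' hS)).1 : Set (Fin n)).ncard :=
        Set.ncard_le_ncard hsub ((f (S.max' hS)).1 : Finset (Fin n)).finite_toSet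
    _ = (f (S.max' hS)).1.card := Set.ncard_coe_finset _
    _ ≤ k := (f (S.max' hS)).2.2

lemma toGraph_injective {k n : ℕ} : Function.Injective (toGraph (k := k) (n := n)) := by
  intro f g h
  funext r
  apply Subtype.ext
  ext w
  by_cases hw : w < r
  · rw [← toGraph_adj_iff f r w hw, h, toGraph_adj_iff g r w hw]
  · simp only [not_lt] at hw
    constructor <;> intro hmem
    · exact absurd ((f r).2.1 hmem) (by simp [not_lt.2 hw])
    · exact absurd ((g r).2.1 hmem) (by simp [not_lt.2 hw])

lemma card_choice (k : ℕ) {n : ℕ} (r : Fin n) :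
    Fintype.card {A : Finset (Fin n) // A ⊆ Finset.Iio r ∧ A.card ≤ k} =
      ∑ i ∈ Finset.range (min (r : ℕ) k + 1), (r : ℕ).choose i := by
  rw [Fintype.card_subtype]
  have h1 : Finset.univ.filter (fun A : Finset (Fin n) => A ⊆ Finset.Iio r ∧ A.card ≤ k)
      = (Finset.Iio r).powerset.filter (fun A => A.card ≤ k) := by
    ext A; simp [Finset.mem_powerset, and_comm]
  rw [h1]
  have h2 : (Finset.Iio r).powerset.filter (fun A => A.card ≤ k)
      = (Finset.range (k+1)).biUnion (fun i => (Finset.Iio r).powersetCard i) := by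
    ext A
    simp only [Finset.mem_filter, Finset.mem_powerset, Finset.mem_biUnion, Finset.mem_range,
      Finset.mem_powersetCard, Nat.lt_succ_iff]
    constructor
    · rintro ⟨h1, h2⟩; exact ⟨A.card, h2, h1, rfl⟩
    · rintro ⟨i, hi, hA, rfl⟩; exact ⟨hA, hi⟩
  rw [h2, Finset.card_biUnion]
  · have hcard : (Finset.Iio r).card = (r : ℕ) := by
      simp [Fin.card_Iio]
    have : ∀ i, ((Finset.Iio r).powersetCard i).card = (r : ℕ).choose i := by
      intro i; rw [Finset.card_powersetCard, hcard]
    simp only [this]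
    symm
    apply Finset.sum_subset
    · exact Finset.range_subset_range.2 (by omega)
    · intro i hi hni
      simp only [Finset.mem_range, Nat.lt_succ_iff] at hi hni
      exact Nat.choose_eq_zero_of_lt (by omega)
  · intro i _ j _ hij
    apply Finset.disjoint_left.2
    intro A hA hA'
    simp only [Finset.mem_powersetCard] at hA hA'
    exact hij (hA.2 ▸ hA'.2)

/-- The number of `k`-degenerate graphs on `Fin n` is at least the number
`D_k(n) = ∏_{r=1}^{n-1} Σ_{i=0}^{min(r,k)} C(r,i)` of well-ordered ones. -/
theorem numKDegenerate_ge (n k : ℕ) (hn : 1 ≤ n) :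
    ∏ r ∈ Finset.Icc 1 (n - 1), ∑ i ∈ Finset.range (min r k + 1), r.choose i ≤
      numKDegenerate k n := by
  have hinj : Function.Injective
      (fun f : DegChoice k n => (⟨toGraph f, toGraph_degenerate f⟩ :
        {G : SimpleGraph (Fin n) // IsKDegenerate k G})) := by
    intro f g h
    exact toGraph_injective (congrArg Subtype.val h)
  have hle := Nat.card_le_card_of_injective _ hinj
  have hcard : Nat.card (DegChoice k n)
      = ∏ r ∈ Finset.Icc 1 (n - 1), ∑ i ∈ Finset.range (min r k + 1), r.choose i := by
    rw [Nat.card_eq_fintype_card, Fintype.card_pi]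
    have := fun r : Fin n => card_choice k r
    simp only [this]
    rw [Fin.prod_univ_eq_prod_range (fun j => ∑ i ∈ Finset.range (min j k + 1), j.choose i)]
    have hsplit : Finset.range n = Finset.Ico 0 n := by rw [Finset.range_eq_Ico]
    rw [hsplit, ← Finset.prod_Ico_consecutive _ (Nat.zero_le 1) hn]
    have h0 : ∏ j ∈ Finset.Ico 0 1, ∑ i ∈ Finset.range (min j k + 1), j.choose i = 1 := by
      simp
    rw [h0, one_mul]
    have : Finset.Ico 1 n = Finset.Icc 1 (n - 1) := by
      rw [← Finset.Ico_add_one_right_eq_Icc]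
      congr 1
      omega
    rw [this]
  rw [numKDegenerate, ← hcard]
  exact hle
end

section
/- Let k ≥ 1 and n ≥ k be natural numbers. Every k-degenerate simple graph G on n vertices has at most C(k,3) + C(k,2)·(n−k) triangles, where a triangle is a set of three pairwise adjacent vertices. (Upper-bound half of Proposition 2, part 2: max_{g ∈ G_{n,k}} △(g) = C(k,3) + C(k,2)(n−k).) -/
/-- The number of triangles of a graph: the number of 3-element vertex sets that are
pairwise adjacent (3-cliques). -/
noncomputable def triangleCount {V : Type*} (G : SimpleGraph V) : ℕ :=
  {s : Finset V | G.IsNClique 3 s}.ncard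

open Classical in
lemma main_lemma (k : ℕ) : ∀ n (V : Type) [Fintype V] (G : SimpleGraph V),
    Fintype.card V = n → IsKDegenerate k G →
    triangleCount G ≤ k.choose 3 + k.choose 2 * (n - k) := by
  intro n
  induction n using Nat.strong_induction_on with
  | _ n ih =>
    intro V _ G hcard hG
    by_cases hnk : n ≤ k
    · -- trivial bound: at most C(n,3) triangles
      have h1 : triangleCount G ≤ n.choose 3 := by
        have hsub : {s : Finset V | G.IsNClique 3 s}
            ⊆ ↑((Finset.univ : Finset V).powersetCard 3) := by
          intro s hs
          simp only [Finset.mem_coe, Finset.mem_powersetCard]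
          exact ⟨Finset.subset_univ s, hs.card_eq⟩
        calc triangleCount G ≤ (↑((Finset.univ : Finset V).powersetCard 3) :
              Set (Finset V)).ncard := Set.ncard_le_ncard hsub (Set.toFinite _)
          _ = n.choose 3 := by
              rw [Set.ncard_coe_finset, Finset.card_powersetCard,
                Finset.card_univ, hcard]
      calc triangleCount G ≤ n.choose 3 := h1
        _ ≤ k.choose 3 := Nat.choose_le_choose 3 hnk
        _ ≤ _ := Nat.le_add_right _ _
    · push_neg at hnk
      have hpos : 0 < n := lt_of_le_of_lt (Nat.zero_le k) hnk
      have huniv : (Finset.univ : Finset V).Nonempty := by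
        rw [← Finset.card_pos, Finset.card_univ, hcard]; exact hpos
      obtain ⟨v, -, hv⟩ := hG Finset.univ huniv
      have hdeg : (G.neighborFinset v).card ≤ k := by
        have heq : {w ∈ ((Finset.univ : Finset V) : Set V) | G.Adj v w}
            = ↑(G.neighborFinset v) := by
          ext w; simp
        rwa [heq, Set.ncard_coe_finset] at hv
      -- the induced graph on vertices ≠ v
      let G' : SimpleGraph {w : V // w ≠ v} := G.comap (fun x => (x : V))
      have hcardV' : Fintype.card {w : V // w ≠ v} = n - 1 := by
        have h2 := Fintype.card_subtype_compl (fun w : V => w = v)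
        simp only [Fintype.card_subtype_eq] at h2
        rw [← hcard]
        exact h2
      have hGdeg' : IsKDegenerate k G' := by
        intro S hS
        obtain ⟨u, huS, hu⟩ := hG (S.map (Function.Embedding.subtype _)) hS.map
        rw [Finset.mem_map] at huS
        obtain ⟨a, haS, rfl⟩ := huS
        refine ⟨a, haS, ?_⟩
        have himg : (fun x : {w : V // w ≠ v} => (x : V)) ''
            {b ∈ (S : Set {w : V // w ≠ v}) | G'.Adj a b}
            ⊆ {w ∈ ((S.map (Function.Embedding.subtype _)) : Set V) |
                G.Adj ((Function.Embedding.subtype _) a) w} := by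
          rintro w ⟨b, ⟨hbS, hab⟩, rfl⟩
          refine ⟨?_, hab⟩
          simp only [Finset.coe_map, Set.mem_image, Finset.mem_coe]
          exact ⟨b, hbS, rfl⟩
        calc {b ∈ (S : Set {w : V // w ≠ v}) | G'.Adj a b}.ncard
            = ((fun x : {w : V // w ≠ v} => (x : V)) ''
                {b ∈ (S : Set {w : V // w ≠ v}) | G'.Adj a b}).ncard := by
              rw [Set.ncard_image_of_injective _ Subtype.val_injective]
          _ ≤ _ := Set.ncard_le_ncard himg (Set.toFinite _)
          _ ≤ k := hu
      have hIH := ih (n-1) (by omega) _ G' hcardV' hGdeg'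
      -- split triangles into those containing v and not
      set T : Set (Finset V) := {s : Finset V | G.IsNClique 3 s} with hT
      have hsplit : T.ncard ≤ {s ∈ T | v ∈ s}.ncard + {s ∈ T | v ∉ s}.ncard := by
        have : T = {s ∈ T | v ∈ s} ∪ {s ∈ T | v ∉ s} := by
          ext s; by_cases h : v ∈ s <;> simp [hT, h]
        nth_rewrite 1 [this]
        exact Set.ncard_union_le _ _
      -- triangles containing v
      have h1 : {s ∈ T | v ∈ s}.ncard ≤ k.choose 2 := by
        have hmaps : ∀ s ∈ {s ∈ T | v ∈ s},
            s.erase v ∈ (↑((G.neighborFinset v).powersetCard 2) :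
              Set (Finset V)) := by
          rintro s ⟨hclique, hvs⟩
          simp only [Finset.mem_coe, Finset.mem_powersetCard]
          refine ⟨?_, ?_⟩
          · intro w hw
            rw [Finset.mem_erase] at hw
            rw [SimpleGraph.mem_neighborFinset]
            exact hclique.1 hvs hw.2 (Ne.symm hw.1)
          · rw [Finset.card_erase_of_mem hvs, hclique.card_eq]
        have hinj : Set.InjOn (fun s : Finset V => s.erase v) {s ∈ T | v ∈ s} := by
          rintro s ⟨-, hvs⟩ t ⟨-, hvt⟩ hst
          rw [← Finset.insert_erase hvs, ← Finset.insert_erase hvt]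
          exact congrArg (insert v) hst
        calc {s ∈ T | v ∈ s}.ncard
            ≤ (↑((G.neighborFinset v).powersetCard 2) : Set (Finset V)).ncard :=
              Set.ncard_le_ncard_of_injOn _ hmaps hinj (Set.toFinite _)
          _ = (G.neighborFinset v).card.choose 2 := by
              rw [Set.ncard_coe_finset, Finset.card_powersetCard]
          _ ≤ k.choose 2 := Nat.choose_le_choose 2 hdeg
      -- triangles avoiding v
      have h2 : {s ∈ T | v ∉ s}.ncard ≤ triangleCount G' := by
        classical
        have hall : ∀ (u : Finset V), v ∉ u →
            (u.subtype (· ≠ v)).map (Function.Embedding.subtype _) = u := by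
          intro u hu
          rw [Finset.subtype_map]
          exact Finset.filter_true_of_mem (fun w hw h => hu (h ▸ hw))
        have hmaps : ∀ s ∈ {s ∈ T | v ∉ s}, s.subtype (· ≠ v) ∈
            {s' : Finset {w : V // w ≠ v} | G'.IsNClique 3 s'} := by
          rintro s ⟨hclique, hvs⟩
          have hallne : ∀ w ∈ s, w ≠ v := fun w hw h => hvs (h ▸ hw)
          constructor
          · intro a ha b hb hab
            rw [Finset.mem_coe, Finset.mem_subtype] at ha hb
            exact hclique.1 ha hb (fun h => hab (Subtype.ext h))
          · rw [Finset.card_subtype, Finset.filter_true_of_mem hallne,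
              hclique.card_eq]
        have hinj : Set.InjOn (fun s : Finset V => s.subtype (· ≠ v))
            {s ∈ T | v ∉ s} := by
          rintro s ⟨-, hvs⟩ t ⟨-, hvt⟩ hst
          rw [← hall s hvs, ← hall t hvt]
          exact congrArg (Finset.map (Function.Embedding.subtype _)) hst
        exact Set.ncard_le_ncard_of_injOn _ hmaps hinj (Set.toFinite _)
      -- combine
      have hnk1 : n - k = (n - 1 - k) + 1 := by omega
      calc triangleCount G = T.ncard := rfl
        _ ≤ _ := hsplit
        _ ≤ k.choose 2 + (k.choose 3 + k.choose 2 * (n - 1 - k)) :=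
            Nat.add_le_add h1 (le_trans h2 hIH)
        _ = k.choose 3 + k.choose 2 * (n - k) := by rw [hnk1, Nat.mul_succ]; ring

/-- Upper-bound half of Proposition 2, part 2: for `1 ≤ k ≤ n`, every `k`-degenerate
simple graph on `n` vertices has at most `C(k,3) + C(k,2)·(n−k)` triangles. -/
theorem triangle_bound_of_isKDegenerate {n k : ℕ} (hk : 1 ≤ k) (hkn : k ≤ n)
    (G : SimpleGraph (Fin n)) (hG : IsKDegenerate k G) :
    triangleCount G ≤ k.choose 3 + k.choose 2 * (n - k) := by
  exact main_lemma k n (Fin n) G (Fintype.card_fin n) hG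
end

section
/- Let k ≥ 1 and n ≥ k be natural numbers. There exists a k-degenerate simple graph G on n vertices with exactly k·n − k(k+1)/2 edges and exactly C(k,3) + C(k,2)·(n−k) triangles; hence the bounds in Proposition 2 are attained (for instance by the graph consisting of a clique on k vertices together with n−k further vertices each adjacent to all k clique vertices). -/
/-!
The extremal graph is the complete split graph: a clique on a set `A` of `k` vertices, with
every other vertex joined to exactly the vertices of `A`. Peeling off a vertex outside `A`
(or, once only `A` is left, any vertex) always removes at most `k` edges, so the graph is
`k`-degenerate. An `(r+1)`-clique contains at most one vertex outside `A`, hence is either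
an `(r+1)`-subset of `A` or such a vertex together with an `r`-subset of `A`; this gives
`C(k, r+1) + (n - k) C(k, r)` cliques, and the edge count follows from the handshake lemma.
-/

open Finset

lemma Nat.choose_two_mul_two_add_self (k : ℕ) : k.choose 2 * 2 + k = k * k := by
  have h := Nat.add_one_mul_choose_eq k 1
  rw [Nat.choose_succ_succ, Nat.choose_one_right] at h
  linarith

lemma Nat.choose_two_add_mul_sub {k n : ℕ} (h : k ≤ n) :
    k.choose 2 + k * (n - k) = k * n - k * (k + 1) / 2 := by
  obtain ⟨m, rfl⟩ := Nat.exists_eq_add_of_le h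
  have hC := Nat.choose_two_mul_two_add_self k
  have hk : k * (k + 1) = k * k + k := by ring
  have hkm : k * (k + m) = k * k + k * m := by ring
  rw [Nat.add_sub_cancel_left, hk, hkm]
  omega

namespace SimpleGraph

variable {V : Type*}

lemma isKDegenerate_card_of_neighborSet_subset {G : SimpleGraph V} (A : Finset V)
    (hA : ∀ v ∉ A, G.neighborSet v ⊆ A) : IsKDegenerate #A G := by
  intro S hS
  have hv : ∃ v ∈ S, {w ∈ (S : Set V) | G.Adj v w} ⊆ A := by
    by_cases hSA : S ⊆ A
    · obtain ⟨v, hv⟩ := hS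
      exact ⟨v, hv, fun w hw => hSA hw.1⟩
    · obtain ⟨v, hvS, hvA⟩ := not_subset.mp hSA
      exact ⟨v, hvS, fun w hw => hA v hvA hw.2⟩
  obtain ⟨v, hvS, hsub⟩ := hv
  exact ⟨v, hvS, (Set.ncard_le_ncard hsub A.finite_toSet).trans (Set.ncard_coe_finset A).le⟩

lemma triangleCount_eq_card_cliqueFinset [Fintype V] [DecidableEq V] (G : SimpleGraph V)
    [DecidableRel G.Adj] : triangleCount G = #(G.cliqueFinset 3) := by
  rw [triangleCount, ← Set.ncard_coe_finset, coe_cliqueFinset]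
  rfl

def completeSplitGraph (A : Finset V) : SimpleGraph V :=
  fromRel fun u _ => u ∈ A

section

variable (A : Finset V)

@[simp]
lemma completeSplitGraph_adj {u v : V} :
    (completeSplitGraph A).Adj u v ↔ u ≠ v ∧ (u ∈ A ∨ v ∈ A) :=
  Iff.rfl

instance [DecidableEq V] : DecidableRel (completeSplitGraph A).Adj :=
  fun _ _ => decidable_of_iff' _ (completeSplitGraph_adj A)

lemma neighborSet_completeSplitGraph_subset {v : V} (hv : v ∉ A) :
    (completeSplitGraph A).neighborSet v ⊆ A :=
  fun _ hw => hw.2.resolve_left hv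

lemma isKDegenerate_completeSplitGraph : IsKDegenerate #A (completeSplitGraph A) :=
  isKDegenerate_card_of_neighborSet_subset A fun _ => neighborSet_completeSplitGraph_subset A

lemma isClique_completeSplitGraph_iff {s : Set V} :
    (completeSplitGraph A).IsClique s ↔ ∀ u ∈ s, ∀ v ∈ s, u ∉ A → v ∉ A → u = v := by
  simp only [isClique_iff, Set.Pairwise, completeSplitGraph_adj]
  grind

variable [Fintype V] [DecidableEq V]

lemma degree_completeSplitGraph_of_mem {v : V} (hv : v ∈ A) :
    (completeSplitGraph A).degree v = Fintype.card V - 1 := by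
  have : (completeSplitGraph A).neighborFinset v = univ.erase v := by
    ext w
    simp [hv, eq_comm]
  rw [← card_neighborFinset_eq_degree, this, card_erase_of_mem (mem_univ v), card_univ]

lemma degree_completeSplitGraph_of_notMem {v : V} (hv : v ∉ A) :
    (completeSplitGraph A).degree v = #A := by
  have : (completeSplitGraph A).neighborFinset v = A := by
    ext w
    simp only [mem_neighborFinset, completeSplitGraph_adj, hv, false_or]
    exact ⟨And.right, fun hw => ⟨fun h => hv (h ▸ hw), hw⟩⟩
  rw [← card_neighborFinset_eq_degree, this]

lemma card_edgeFinset_completeSplitGraph :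
    #(completeSplitGraph A).edgeFinset = (#A).choose 2 + #A * (Fintype.card V - #A) := by
  have hdeg := sum_degrees_eq_twice_card_edges (completeSplitGraph A)
  rw [← sum_add_sum_compl A,
    sum_congr rfl fun v hv => degree_completeSplitGraph_of_mem A hv,
    sum_congr rfl fun v hv => degree_completeSplitGraph_of_notMem A (mem_compl.mp hv),
    sum_const, sum_const, card_compl, smul_eq_mul, smul_eq_mul] at hdeg
  have hpred : #A * (Fintype.card V - 1) + #A = #A * Fintype.card V := by
    rcases Nat.eq_zero_or_pos #A with h0 | hpos
    · simp [h0]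
    · rw [← mul_add_one, Nat.sub_one_add_one (hpos.trans_le (card_le_univ A)).ne']
  obtain ⟨m, hm⟩ := Nat.exists_eq_add_of_le (card_le_univ A)
  have hC := Nat.choose_two_mul_two_add_self #A
  rw [hm] at hpred
  rw [hm, Nat.add_sub_cancel_left] at hdeg ⊢
  linarith

lemma cliqueFinset_succ_completeSplitGraph (r : ℕ) :
    (completeSplitGraph A).cliqueFinset (r + 1) =
      A.powersetCard (r + 1) ∪ (Aᶜ ×ˢ A.powersetCard r).image fun p => insert p.1 p.2 := by
  ext s
  simp only [mem_cliqueFinset_iff, isNClique_iff, isClique_completeSplitGraph_iff, mem_coe,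
    mem_union, mem_powersetCard, mem_image, mem_product, mem_compl, Prod.exists]
  constructor
  · rintro ⟨hcl, hcard⟩
    by_cases hsA : s ⊆ A
    · exact Or.inl ⟨hsA, hcard⟩
    · obtain ⟨w, hws, hwA⟩ := not_subset.mp hsA
      refine Or.inr ⟨w, s.erase w, ⟨hwA, fun u hu => ?_, by simp [card_erase_of_mem hws, hcard]⟩,
        insert_erase hws⟩
      by_contra huA
      exact (ne_of_mem_erase hu) (hcl u (mem_of_mem_erase hu) w hws huA hwA)
  · rintro (⟨hsA, hcard⟩ | ⟨w, p, ⟨hwA, hpA, hcard⟩, rfl⟩)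
    · exact ⟨fun u hu _ _ huA _ => absurd (hsA hu) huA, hcard⟩
    · have hwp : w ∉ p := fun h => hwA (hpA h)
      refine ⟨fun u hu v hv huA hvA => ?_, by rw [card_insert_of_notMem hwp, hcard]⟩
      rw [mem_insert] at hu hv
      rcases hu with rfl | hu
      · rcases hv with rfl | hv
        · rfl
        · exact absurd (hpA hv) hvA
      · exact absurd (hpA hu) huA

lemma card_cliqueFinset_succ_completeSplitGraph (r : ℕ) :
    #((completeSplitGraph A).cliqueFinset (r + 1)) =
      (#A).choose (r + 1) + (Fintype.card V - #A) * (#A).choose r := by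
  have hdisj : Disjoint (A.powersetCard (r + 1))
      ((Aᶜ ×ˢ A.powersetCard r).image fun p => insert p.1 p.2) := by
    rw [Finset.disjoint_left]
    intro s hs hs'
    obtain ⟨⟨w, p⟩, hwp, rfl⟩ := mem_image.mp hs'
    exact (mem_compl.mp (mem_product.mp hwp).1) ((mem_powersetCard.mp hs).1 (mem_insert_self w p))
  have hinj : Set.InjOn (fun p : V × Finset V => insert p.1 p.2) ↑(Aᶜ ×ˢ A.powersetCard r) := by
    rintro ⟨w, p⟩ hwp ⟨w', p'⟩ hwp' h
    simp only [mem_coe, mem_product, mem_compl, mem_powersetCard] at hwp hwp' h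
    obtain rfl : w = w' :=
      (mem_insert.mp (h ▸ mem_insert_self w p)).resolve_right fun hw => hwp.1 (hwp'.2.1 hw)
    have hinter : ∀ {q : Finset V}, q ⊆ A → insert w q ∩ A = q := fun hq => by
      rw [insert_inter_of_notMem hwp.1, inter_eq_left.mpr hq]
    rw [← hinter hwp.2.1, ← hinter hwp'.2.1, h]
  rw [cliqueFinset_succ_completeSplitGraph, card_union_of_disjoint hdisj, card_powersetCard,
    card_image_of_injOn hinj, card_product, card_powersetCard, card_compl]

end

end SimpleGraph

open SimpleGraph

theorem exists_extremal_kDegenerate_general {n k : ℕ} (hkn : k ≤ n) :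
    ∃ G : SimpleGraph (Fin n), IsKDegenerate k G ∧
      G.edgeSet.ncard = k * n - k * (k + 1) / 2 ∧
      triangleCount G = k.choose 3 + k.choose 2 * (n - k) := by
  set A : Finset (Fin n) := univ.map (Fin.castLEEmb hkn)
  have hA : #A = k := by simp [A]
  refine ⟨completeSplitGraph A, hA ▸ isKDegenerate_completeSplitGraph A, ?_, ?_⟩
  · rw [← coe_edgeFinset, Set.ncard_coe_finset, card_edgeFinset_completeSplitGraph, hA,
      Fintype.card_fin, Nat.choose_two_add_mul_sub hkn]
  · rw [triangleCount_eq_card_cliqueFinset, card_cliqueFinset_succ_completeSplitGraph, hA,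
      Fintype.card_fin, mul_comm]

/-- The bounds of Proposition 2 are attained: for `1 ≤ k ≤ n` there is a
`k`-degenerate graph on `n` vertices with exactly `k·n − k(k+1)/2` edges and exactly
`C(k,3) + C(k,2)·(n−k)` triangles. -/
theorem exists_extremal_kDegenerate {n k : ℕ} (hk : 1 ≤ k) (hkn : k ≤ n) :
    ∃ G : SimpleGraph (Fin n), IsKDegenerate k G ∧
      G.edgeSet.ncard = k * n - k * (k + 1) / 2 ∧
      triangleCount G = k.choose 3 + k.choose 2 * (n - k) :=
  exists_extremal_kDegenerate_general hkn
end

section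
/- For every fixed integer k ≥ 1, the edge and triangle sufficient statistics of the k-degeneracy-restricted model are stable: both (max over k-degenerate simple graphs G on n vertices of the number of edges of G) / log S_k(n) and (max over k-degenerate simple graphs G on n vertices of the number of triangles of G) / log S_k(n) tend to 0 as n → ∞. -/
open Filter

/-- The maximum number of edges of a `k`-degenerate graph on `Fin n`. -/
noncomputable def maxEdges (k n : ℕ) : ℕ :=
  sSup {m : ℕ | ∃ G : SimpleGraph (Fin n), IsKDegenerate k G ∧ G.edgeSet.ncard = m}

/-- The maximum number of triangles of a `k`-degenerate graph on `Fin n`. -/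
noncomputable def maxTriangles (k n : ℕ) : ℕ :=
  sSup {m : ℕ | ∃ G : SimpleGraph (Fin n), IsKDegenerate k G ∧ triangleCount G = m}

/-!
In a `k`-degenerate graph, every vertex set `S` contains a vertex `v` with at most `k` neighbours
in `S`; the `(m + 1)`-cliques inside `S` through `v` are determined by `m` of those neighbours, so
induction on `S` bounds the number of `(m + 1)`-cliques by `k ^ m * n`. Hence both statistics are
`O(n)`. On the other hand, each map `Fin (n - n / 2) → Fin (n / 2)` has a distinct graph, a
`1`-degenerate star forest, so `log S_k(n) ≥ (n / 2) * log (n / 2)`, which outgrows `n`.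
-/

open Finset

theorem isKDegenerate_bot {V : Type*} (k : ℕ) : IsKDegenerate k (⊥ : SimpleGraph V) :=
  fun _ ⟨v, hv⟩ => ⟨v, hv, by simp⟩

namespace IsKDegenerate

variable {V W : Type*} {k l : ℕ}

theorem mono_s11 {G : SimpleGraph V} (hkl : k ≤ l) (hG : IsKDegenerate k G) :
    IsKDegenerate l G := fun S hS =>
  (hG S hS).imp fun _ ⟨hv, hdeg⟩ => ⟨hv, hdeg.trans hkl⟩

theorem comap {G : SimpleGraph W} (f : V ↪ W) (hG : IsKDegenerate k G) :
    IsKDegenerate k (G.comap f) := by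
  classical
  intro S hS
  obtain ⟨_, hw, hdeg⟩ := hG (S.map f) (hS.map)
  obtain ⟨v, hv, rfl⟩ := mem_map.1 hw
  refine ⟨v, hv, ?_⟩
  calc {u ∈ (S : Set V) | G.Adj (f v) (f u)}.ncard
      = (f '' {u ∈ (S : Set V) | G.Adj (f v) (f u)}).ncard :=
        (Set.ncard_image_of_injective _ f.injective).symm
    _ ≤ {w ∈ (S.map f : Set W) | G.Adj (f v) w}.ncard := by
        refine Set.ncard_le_ncard ?_ (Set.toFinite _)
        rintro _ ⟨u, ⟨hu, hadj⟩, rfl⟩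
        exact ⟨by simpa using hu, hadj⟩
    _ ≤ k := hdeg

variable {G : SimpleGraph V} [DecidableEq V] [DecidableRel G.Adj]

theorem card_isNClique_subset_le (hG : IsKDegenerate k G) (m : ℕ) (S : Finset V) :
    #{s ∈ S.powerset | G.IsNClique (m + 1) s} ≤ k ^ m * #S := by
  induction S using Finset.strongInduction with
  | _ S ih =>
  rcases S.eq_empty_or_nonempty with rfl | hS
  · simp [SimpleGraph.isNClique_iff]
  obtain ⟨v, hv, hdeg⟩ := hG S hS
  set N := {w ∈ S | G.Adj v w}
  have hN : #N ≤ k := by simpa [N, ← Set.ncard_coe_finset] using hdeg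
  set C := {s ∈ S.powerset | G.IsNClique (m + 1) s}
  have h_not_mem : #{s ∈ C | v ∉ s} ≤ k ^ m * (#S - 1) := by
    rw [← card_erase_of_mem hv]
    refine le_trans (card_le_card fun s => ?_) (ih _ (erase_ssubset hv))
    simp only [C, mem_filter, mem_powerset]
    exact fun ⟨⟨hsS, hs⟩, hvs⟩ => ⟨subset_erase.2 ⟨hsS, hvs⟩, hs⟩
  have h_mem : #{s ∈ C | v ∈ s} ≤ k ^ m := by
    calc _ ≤ #(N.powersetCard m) := by
          refine card_le_card_of_injOn (·.erase v) (fun s hs => ?_)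
            fun s₁ hs₁ s₂ hs₂ h => ?_
          · simp only [C, coe_filter, mem_filter, mem_powerset, Set.mem_ofPred_eq] at hs
            obtain ⟨⟨hsS, hs⟩, hvs⟩ := hs
            simp only [mem_coe, mem_powersetCard]
            refine ⟨fun w hw => ?_, by simp [card_erase_of_mem hvs, hs.card_eq]⟩
            obtain ⟨hwv, hws⟩ := mem_erase.1 hw
            exact mem_filter.2 ⟨hsS hws, hs.isClique hvs hws (Ne.symm hwv)⟩
          · simp only [coe_filter, Set.mem_ofPred_eq] at hs₁ hs₂
            rw [← insert_erase hs₁.2, ← insert_erase hs₂.2]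
            exact congrArg (insert v) h
      _ = (#N).choose m := card_powersetCard _ _
      _ ≤ k ^ m := (Nat.choose_le_pow _ _).trans (Nat.pow_le_pow_left hN m)
  have hS₁ : 1 ≤ #S := card_pos.2 hS
  calc #C = #{s ∈ C | v ∉ s} + #{s ∈ C | v ∈ s} := by
        rw [add_comm, card_filter_add_card_filter_not]
    _ ≤ k ^ m * (#S - 1) + k ^ m := add_le_add h_not_mem h_mem
    _ = k ^ m * #S := by
        rw [Nat.mul_sub, mul_one, Nat.sub_add_cancel (Nat.le_mul_of_pos_right _ hS₁)]

variable [Fintype V]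

theorem card_cliqueFinset_le (hG : IsKDegenerate k G) (m : ℕ) :
    #(G.cliqueFinset (m + 1)) ≤ k ^ m * Fintype.card V := by
  simpa [SimpleGraph.cliqueFinset] using hG.card_isNClique_subset_le m univ

/-- An edge is a `2`-clique. -/
theorem card_edgeFinset_le [Fintype G.edgeSet] (hG : IsKDegenerate k G) :
    #G.edgeFinset ≤ k * Fintype.card V := by
  calc #G.edgeFinset ≤ #(G.cliqueFinset 2) := by
        refine card_le_card_of_injOn Sym2.toFinset (fun e he => ?_) fun e₁ _ e₂ _ h => ?_
        · induction e with
          | _ a b =>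
          have hab : G.Adj a b := by simpa using he
          simp [Sym2.toFinset_mk_eq, SimpleGraph.isNClique_iff, hab, hab.ne]
        · exact Sym2.ext fun a => by rw [← Sym2.mem_toFinset, ← Sym2.mem_toFinset, h]
    _ ≤ k * Fintype.card V := by simpa using hG.card_cliqueFinset_le 1

end IsKDegenerate

theorem edgeSet_ncard_le_of_isKDegenerate {k n : ℕ} {G : SimpleGraph (Fin n)}
    (hG : IsKDegenerate k G) :
    G.edgeSet.ncard ≤ k * n := by
  classical
  simpa [← SimpleGraph.coe_edgeFinset, Set.ncard_coe_finset] using hG.card_edgeFinset_le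

theorem triangleCount_le_of_isKDegenerate {k n : ℕ} {G : SimpleGraph (Fin n)}
    (hG : IsKDegenerate k G) :
    triangleCount G ≤ k ^ 2 * n := by
  classical
  have h := hG.card_cliqueFinset_le 2
  rwa [← Set.ncard_coe_finset, SimpleGraph.coe_cliqueFinset, Fintype.card_fin] at h

theorem maxEdges_le (k n : ℕ) : maxEdges k n ≤ k * n :=
  csSup_le ⟨_, ⊥, isKDegenerate_bot k, rfl⟩ fun _ ⟨_, hG, hm⟩ =>
    hm ▸ edgeSet_ncard_le_of_isKDegenerate hG

theorem maxTriangles_le (k n : ℕ) : maxTriangles k n ≤ k ^ 2 * n :=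
  csSup_le ⟨_, ⊥, isKDegenerate_bot k, rfl⟩ fun _ ⟨_, hG, hm⟩ =>
    hm ▸ triangleCount_le_of_isKDegenerate hG

section funGraph

variable {α β : Type*}

/-- The graph of `f`, a disjoint union of stars centred in `β`. -/
def funGraph (f : α → β) : SimpleGraph (α ⊕ β) :=
  SimpleGraph.fromRel fun x y => ∃ a, x = .inl a ∧ y = .inr (f a)

variable {f : α → β}

theorem funGraph_adj_inl {a : α} {y : α ⊕ β} :
    (funGraph f).Adj (.inl a) y ↔ y = .inr (f a) := by
  constructor
  · rintro ⟨-, ⟨a', ha', rfl⟩ | ⟨a', -, h⟩⟩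
    · cases ha'; rfl
    · cases h
  · rintro rfl
    exact ⟨by simp, .inl ⟨a, rfl, rfl⟩⟩

theorem funGraph_not_adj_inr {b b' : β} : ¬(funGraph f).Adj (.inr b) (.inr b') := by
  rintro ⟨-, ⟨_, h, -⟩ | ⟨_, h, -⟩⟩ <;> cases h

theorem funGraph_injective :
    Function.Injective (funGraph : (α → β) → SimpleGraph (α ⊕ β)) := by
  intro f g h
  funext a
  have hadj : (funGraph g).Adj (.inl a) (.inr (f a)) := h ▸ funGraph_adj_inl.2 rfl
  exact Sum.inr_injective (funGraph_adj_inl.1 hadj)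

theorem isKDegenerate_funGraph (f : α → β) : IsKDegenerate 1 (funGraph f) := by
  intro S ⟨v, hv⟩
  by_cases h : ∃ a, Sum.inl a ∈ S
  · obtain ⟨a, ha⟩ := h
    refine ⟨_, ha, ?_⟩
    calc _ ≤ ({.inr (f a)} : Set (α ⊕ β)).ncard :=
          Set.ncard_le_ncard (fun y hy => funGraph_adj_inl.1 hy.2) (Set.toFinite _)
      _ = 1 := Set.ncard_singleton _
  · push Not at h
    obtain ⟨b, rfl⟩ : ∃ b, v = .inr b := by cases v with
      | inl a => exact absurd hv (h a)
      | inr b => exact ⟨b, rfl⟩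
    have hnbrs : {w ∈ (S : Set (α ⊕ β)) | (funGraph f).Adj (.inr b) w} = ∅ := by
      refine Set.eq_empty_of_forall_notMem fun y ⟨hy, hadj⟩ => ?_
      cases y with
      | inl a => exact h a hy
      | inr b' => exact funGraph_not_adj_inr hadj
    exact ⟨_, hv, by rw [hnbrs, Set.ncard_empty]; exact zero_le_one⟩

end funGraph

theorem pow_le_numKDegenerate {k : ℕ} (hk : 1 ≤ k) (a b : ℕ) :
    b ^ a ≤ numKDegenerate k (a + b) := by
  let graphOf (f : Fin a → Fin b) : {G : SimpleGraph (Fin (a + b)) // IsKDegenerate k G} :=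
    ⟨finSumFinEquiv.simpleGraph (funGraph f),
      ((isKDegenerate_funGraph f).mono_s11 hk).comap finSumFinEquiv.symm.toEmbedding⟩
  have hinj : Function.Injective graphOf := fun f g h =>
    funGraph_injective (finSumFinEquiv.simpleGraph.injective (congrArg Subtype.val h))
  simpa [numKDegenerate] using Nat.card_le_card_of_injective graphOf hinj

open Real in
theorem tendsto_natCast_div_log_numKDegenerate {k : ℕ} (hk : 1 ≤ k) :
    Tendsto (fun n : ℕ => (n : ℝ) / log (numKDegenerate k n)) atTop (nhds 0) := by
  have hlog : Tendsto (fun n : ℕ => 2 / log (n / 2 : ℕ)) atTop (nhds 0) :=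
    tendsto_const_nhds.div_atTop <| tendsto_log_atTop.comp <|
      tendsto_natCast_atTop_atTop.comp (Nat.tendsto_div_const_atTop two_ne_zero)
  refine tendsto_of_tendsto_of_tendsto_of_le_of_le' tendsto_const_nhds hlog
    (.of_forall fun n => div_nonneg n.cast_nonneg (log_natCast_nonneg _)) ?_
  filter_upwards [eventually_ge_atTop 4] with n hn
  set b := n / 2
  set a := n - b
  have hb : (2 : ℝ) ≤ b := by exact_mod_cast (by omega : 2 ≤ b)
  have hna : (n : ℝ) ≤ 2 * a := by exact_mod_cast (by omega : n ≤ 2 * a)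
  have ha : (0 : ℝ) < a := by exact_mod_cast (by omega : 0 < a)
  have hlogb : 0 < log b := log_pos (by linarith)
  have hcount : (b : ℝ) ^ a ≤ numKDegenerate k n := by
    exact_mod_cast (Nat.sub_add_cancel (Nat.div_le_self n 2)) ▸ pow_le_numKDegenerate hk a b
  have hL : a * log b ≤ log (numKDegenerate k n) := by
    rw [← log_pow]
    exact log_le_log (by positivity) hcount
  calc (n : ℝ) / log (numKDegenerate k n) ≤ 2 * a / (a * log b) :=
        div_le_div₀ (by positivity) hna (by positivity) hL
    _ = 2 / log b := by field_simp

theorem tendsto_div_log_numKDegenerate_of_le {k C : ℕ} (hk : 1 ≤ k) {f : ℕ → ℕ}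
    (hf : ∀ n, f n ≤ C * n) :
    Tendsto (fun n : ℕ => (f n : ℝ) / Real.log (numKDegenerate k n)) atTop (nhds 0) := by
  have hC := (tendsto_natCast_div_log_numKDegenerate hk).const_mul (C : ℝ)
  rw [mul_zero] at hC
  refine tendsto_of_tendsto_of_tendsto_of_le_of_le tendsto_const_nhds hC
    (fun n => div_nonneg (f n).cast_nonneg (Real.log_natCast_nonneg _)) fun n => ?_
  rw [← mul_div_assoc]
  exact div_le_div_of_nonneg_right (by exact_mod_cast hf n : (f n : ℝ) ≤ C * n)
    (Real.log_natCast_nonneg _)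

/-- Stability of the edge and triangle statistics of the `k`-degeneracy-restricted
model (Proposition 2 together with Theorem 1): for fixed `k ≥ 1`, both
`max e(g) / log S_k(n)` and `max △(g) / log S_k(n)` tend to `0` as `n → ∞`. -/
theorem edge_triangle_statistics_stable (k : ℕ) (hk : 1 ≤ k) :
    Tendsto (fun n : ℕ => (maxEdges k n : ℝ) / Real.log (numKDegenerate k n))
        atTop (nhds 0) ∧
      Tendsto (fun n : ℕ => (maxTriangles k n : ℝ) / Real.log (numKDegenerate k n))
        atTop (nhds 0) :=
  ⟨tendsto_div_log_numKDegenerate_of_le hk (maxEdges_le k),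
    tendsto_div_log_numKDegenerate_of_le hk (maxTriangles_le k)⟩
end

section
/- Let Ω be a nonempty finite set and f : Ω → ℝ a function with f(g) ≥ 0 for all g ∈ Ω. Let F = max_{g ∈ Ω} f(g) and let M = {g ∈ Ω : f(g) = F} be the set of maximizers. Then the Gibbs mass of the modes satisfies (Σ_{g ∈ M} e^{f(g)}) / (Σ_{g ∈ Ω} e^{f(g)}) ≤ |M|·e^{F} / (|M|·e^{F} + |Ω| − |M|). -/
/-!
On the modes `f = F`, so their Gibbs weight is exactly `|M| e^F`; off the modes `f ≥ 0` gives
weight `e^f ≥ 1`, so the partition function is at least `|M| e^F + (|Ω| - |M|)`. Shrinking the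
denominator of `|M| e^F / Z` to this positive lower bound can only increase the ratio.
-/

open Finset

theorem Finset.sum_filter_add_card_sub_le_sum {α : Type*} (s : Finset α) (p : α → Prop)
    [DecidablePred p] (w : α → ℝ) (hw : ∀ a ∈ s, ¬ p a → 1 ≤ w a) :
    ∑ a ∈ s.filter p, w a + ((#s : ℝ) - #(s.filter p)) ≤ ∑ a ∈ s, w a := by
  have hcard : (#(s.filter (¬ p ·)) : ℝ) = #s - #(s.filter p) := by
    rw [← card_filter_add_card_filter_not (s := s) p]
    push_cast
    ring
  have hrest : (#(s.filter (¬ p ·)) : ℝ) ≤ ∑ a ∈ s.filter (¬ p ·), w a := by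
    simpa using card_nsmul_le_sum (s.filter (¬ p ·)) w 1
      fun a ha => hw a (mem_filter.1 ha).1 (mem_filter.1 ha).2
  rw [← hcard, ← sum_filter_add_sum_filter_not s p w]
  linarith

theorem Finset.nonempty_filter_eq_sup' {α β : Type*} [LinearOrder β] (s : Finset α)
    (H : s.Nonempty) (f : α → β) : (s.filter (f · = s.sup' H f)).Nonempty := by
  obtain ⟨a, ha, hfa⟩ := exists_mem_eq_sup' H f
  exact ⟨a, mem_filter.2 ⟨ha, hfa.symm⟩⟩

open scoped Classical in
/-- Key inequality in the proof of Theorem 3 (stability implies non-degeneracy):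
for a finite nonempty set `Ω` and a nonnegative energy `f`, with `F = max f` and
`M` the set of maximizers (modes), the Gibbs mass of the modes satisfies
`(Σ_{g∈M} e^{f g}) / (Σ_{g∈Ω} e^{f g}) ≤ |M|·e^F / (|M|·e^F + |Ω| − |M|)`. -/
theorem gibbs_mass_of_modes_le {Ω : Type*} [Fintype Ω] [Nonempty Ω]
    (f : Ω → ℝ) (hf : ∀ g, 0 ≤ f g) :
    (∑ g ∈ Finset.univ.filter
          (fun g => f g = Finset.univ.sup' Finset.univ_nonempty f), Real.exp (f g)) /
        (∑ g : Ω, Real.exp (f g)) ≤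
      ((Finset.univ.filter
            (fun g => f g = Finset.univ.sup' Finset.univ_nonempty f)).card *
          Real.exp (Finset.univ.sup' Finset.univ_nonempty f)) /
        ((Finset.univ.filter
              (fun g => f g = Finset.univ.sup' Finset.univ_nonempty f)).card *
            Real.exp (Finset.univ.sup' Finset.univ_nonempty f) +
          (Fintype.card Ω : ℝ) -
          (Finset.univ.filter
              (fun g => f g = Finset.univ.sup' Finset.univ_nonempty f)).card) := by
  set F := univ.sup' univ_nonempty f
  set M := univ.filter (fun g => f g = F) with hM
  have hmass : ∑ g ∈ M, Real.exp (f g) = #M * Real.exp F := by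
    rw [sum_eq_card_nsmul fun g hg => by rw [(mem_filter.1 hg).2], nsmul_eq_mul]
  have hM_pos : (0 : ℝ) < #M := by
    exact_mod_cast (nonempty_filter_eq_sup' univ univ_nonempty f).card_pos
  have hM_le : (#M : ℝ) ≤ Fintype.card Ω := by exact_mod_cast card_filter_le univ _
  have hZ : #M * Real.exp F + (Fintype.card Ω - #M) ≤ ∑ g, Real.exp (f g) := by
    have := sum_filter_add_card_sub_le_sum univ (fun g => f g = F) (fun g => Real.exp (f g))
      fun g _ _ => Real.one_le_exp (hf g)
    rwa [← hM, hmass, card_univ] at this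
  have hmass_pos : 0 < #M * Real.exp F := mul_pos hM_pos (Real.exp_pos F)
  rw [hmass, add_sub_assoc]
  exact div_le_div_of_nonneg_left hmass_pos.le (by linarith) hZ
end

section
/- Let (Ω_n) be a sequence of nonempty finite sets and f_n : Ω_n → ℝ functions with f_n(g) ≥ 0 for all g. Let M_n = {g ∈ Ω_n : f_n(g) = max f_n} be the set of modes. Suppose there is a constant C with |M_n| ≤ C for all n, that log |Ω_n| → ∞, and that (max_{g ∈ Ω_n} f_n(g)) / log |Ω_n| → 0 as n → ∞ (stability). Then the probability assigned to the modes by the Gibbs distribution tends to zero: (Σ_{g ∈ M_n} e^{f_n(g)}) / (Σ_{g ∈ Ω_n} e^{f_n(g)}) → 0 as n → ∞. (Theorem 3: stability implies asymptotic non-degeneracy.) -/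
open Filter
open scoped Classical

/-- Theorem 3 (stability implies asymptotic non-degeneracy): for a sequence of
nonempty finite sets `Ω n` with nonnegative energies `f n`, if the number of modes
is uniformly bounded, `log |Ω n| → ∞`, and `(max f n) / log |Ω n| → 0` (stability),
then the Gibbs probability of the set of modes tends to `0`. -/
theorem stability_implies_nondegeneracy
    (Ω : ℕ → Type*) [∀ n, Fintype (Ω n)] [∀ n, Nonempty (Ω n)]
    (f : ∀ n, Ω n → ℝ) (hf : ∀ n g, 0 ≤ f n g)
    (C : ℕ)
    (hM : ∀ n, (Finset.univ.filter
        (fun g => f n g = Finset.univ.sup' Finset.univ_nonempty (f n))).card ≤ C)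
    (hΩ : Tendsto (fun n => Real.log (Fintype.card (Ω n))) atTop atTop)
    (hstable : Tendsto
      (fun n => Finset.univ.sup' Finset.univ_nonempty (f n) /
        Real.log (Fintype.card (Ω n))) atTop (nhds 0)) :
    Tendsto
      (fun n =>
        (∑ g ∈ Finset.univ.filter
            (fun g => f n g = Finset.univ.sup' Finset.univ_nonempty (f n)),
          Real.exp (f n g)) / (∑ g : Ω n, Real.exp (f n g)))
      atTop (nhds 0) := by
  set S : ℕ → ℝ := fun n => Finset.univ.sup' Finset.univ_nonempty (f n) with hS
  set L : ℕ → ℝ := fun n => Real.log (Fintype.card (Ω n)) with hL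
  -- bound sequence tends to 0
  have hSL : Tendsto (fun n => S n - L n) atTop atBot := by
    have h1 : Tendsto (fun n => S n / L n - 1) atTop (nhds (0 - 1)) :=
      hstable.sub_const 1
    have h2 : Tendsto (fun n => L n * (S n / L n - 1)) atTop atBot := by
      exact Tendsto.atTop_mul_neg (by norm_num : (0:ℝ)-1 < 0) hΩ h1
    have hev : ∀ᶠ n in atTop, L n * (S n / L n - 1) = S n - L n := by
      filter_upwards [hΩ.eventually_gt_atTop 0] with n hn
      field_simp
    exact h2.congr' hev
  have hbound : Tendsto (fun n => (C : ℝ) * Real.exp (S n - L n)) atTop (nhds 0) := by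
    have := (Real.tendsto_exp_atBot.comp hSL).const_mul (C : ℝ)
    simpa using this
  refine squeeze_zero (fun n => ?_) (fun n => ?_) hbound
  · apply div_nonneg
    · exact Finset.sum_nonneg fun g _ => (Real.exp_pos _).le
    · exact Finset.sum_nonneg fun g _ => (Real.exp_pos _).le
  · have hcard1 : (1 : ℝ) ≤ (Fintype.card (Ω n) : ℝ) := by
      exact_mod_cast Fintype.card_pos
    have hden : ((Fintype.card (Ω n) : ℝ)) ≤ ∑ g : Ω n, Real.exp (f n g) := by
      calc ((Fintype.card (Ω n) : ℝ)) = ∑ _g : Ω n, (1 : ℝ) := by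
            simp [Finset.card_univ]
        _ ≤ ∑ g : Ω n, Real.exp (f n g) :=
            Finset.sum_le_sum fun g _ => Real.one_le_exp (hf n g)
    have hdenpos : (0 : ℝ) < ∑ g : Ω n, Real.exp (f n g) :=
      lt_of_lt_of_le (by linarith) hden
    have hnum : (∑ g ∈ Finset.univ.filter (fun g => f n g = S n), Real.exp (f n g))
        ≤ (C : ℝ) * Real.exp (S n) := by
      calc (∑ g ∈ Finset.univ.filter (fun g => f n g = S n), Real.exp (f n g))
          ≤ ∑ _g ∈ Finset.univ.filter (fun g => f n g = S n), Real.exp (S n) := by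
            refine Finset.sum_le_sum fun g hg => ?_
            have := (Finset.mem_filter.mp hg).2
            simp [this]
        _ = ((Finset.univ.filter (fun g => f n g = S n)).card : ℝ) * Real.exp (S n) := by
            simp [Finset.sum_const, nsmul_eq_mul]
        _ ≤ (C : ℝ) * Real.exp (S n) := by
            have := hM n
            have : ((Finset.univ.filter (fun g => f n g = S n)).card : ℝ) ≤ (C : ℝ) := by
              exact_mod_cast this
            exact mul_le_mul_of_nonneg_right this (Real.exp_pos _).le
    calc (∑ g ∈ Finset.univ.filter (fun g => f n g = S n), Real.exp (f n g))
          / (∑ g : Ω n, Real.exp (f n g))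
        ≤ ((C : ℝ) * Real.exp (S n)) / (Fintype.card (Ω n) : ℝ) := by
          exact div_le_div₀ (by positivity) hnum (by linarith) hden
      _ = (C : ℝ) * Real.exp (S n - L n) := by
          rw [Real.exp_sub, hL]
          rw [Real.exp_log (by linarith : (0:ℝ) < (Fintype.card (Ω n) : ℝ))]
          ring
end

section
/- Let d ≥ 1 and let x_1, …, x_B be finitely many vectors in ℝ^d such that the zero vector 0 lies in the interior of the convex hull of {x_1, …, x_B}. Then the function f(θ) = Σ_{b=1}^{B} exp⟨θ, x_b⟩ attains a global minimum on ℝ^d; equivalently, the estimated log-likelihood θ ↦ −log(Σ_{b=1}^{B} exp⟨θ, x_b⟩) attains a global maximum, so the approximate MLE exists. -/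
/-!
If the closed ball of radius `ε` about `0` lies in the convex hull of the `x b`, then for every
`θ` some `⟨θ, x b⟩` is at least `ε ‖θ‖` (test the half-space `⟨θ, ·⟩ ≤ max_b ⟨θ, x b⟩` at the
point `ε θ / ‖θ‖`). Hence `Σ_b exp⟨θ, x b⟩ ≥ exp (ε ‖θ‖)` is coercive, and a continuous coercive
function on `ℝ^d` attains its minimum; `−log` turns the minimiser into a maximiser.
-/

open Filter Metric

section Coercivity

variable {E : Type*} [NormedAddCommGroup E] [InnerProductSpace ℝ E]

theorem mul_norm_le_of_closedBall_subset_convexHull {s : Set E} {ε c : ℝ} (hε : 0 ≤ ε)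
    (hball : closedBall 0 ε ⊆ convexHull ℝ s) (θ : E) (hc : ∀ y ∈ s, inner ℝ θ y ≤ c) :
    ε * ‖θ‖ ≤ c := by
  have hhull : convexHull ℝ s ⊆ {y | inner ℝ θ y ≤ c} :=
    convexHull_min hc (convex_halfSpace_le (innerSL ℝ θ).toLinearMap.isLinear c)
  rcases eq_or_ne θ 0 with rfl | hθ
  · simpa using hhull (hball (mem_closedBall_self hε))
  have hθn : 0 < ‖θ‖ := norm_pos_iff.mpr hθ
  have hu : (ε / ‖θ‖) • θ ∈ closedBall (0 : E) ε := by
    rw [mem_closedBall_zero_iff, norm_smul, Real.norm_eq_abs, abs_of_nonneg (by positivity),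
      div_mul_cancel₀ _ hθn.ne']
  have h : inner ℝ θ ((ε / ‖θ‖) • θ) ≤ c := hhull (hball hu)
  rw [real_inner_smul_right, real_inner_self_eq_norm_sq] at h
  calc ε * ‖θ‖ = ε / ‖θ‖ * ‖θ‖ ^ 2 := by field_simp
    _ ≤ c := h

theorem exists_exp_mul_norm_le_sum_exp_inner {ι : Type*} [Fintype ι] (x : ι → E)
    (h0 : (0 : E) ∈ interior (convexHull ℝ (Set.range x))) :
    ∃ ε > 0, ∀ θ : E, Real.exp (ε * ‖θ‖) ≤ ∑ b, Real.exp (inner ℝ θ (x b)) := by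
  obtain ⟨ε, hε, hball⟩ := nhds_basis_closedBall.mem_iff.mp (mem_interior_iff_mem_nhds.mp h0)
  have : Nonempty ι := Set.range_nonempty_iff_nonempty.mp <|
    convexHull_nonempty_iff.mp ⟨0, interior_subset h0⟩
  refine ⟨ε, hε, fun θ => ?_⟩
  obtain ⟨b, hb⟩ := Finite.exists_max fun b => inner ℝ θ (x b)
  have hle : ε * ‖θ‖ ≤ inner ℝ θ (x b) :=
    mul_norm_le_of_closedBall_subset_convexHull hε.le hball θ (by rintro _ ⟨c, rfl⟩; exact hb c)
  calc Real.exp (ε * ‖θ‖) ≤ Real.exp (inner ℝ θ (x b)) := Real.exp_le_exp.mpr hle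
    _ ≤ ∑ c, Real.exp (inner ℝ θ (x c)) :=
      Finset.single_le_sum (f := fun c => Real.exp (inner ℝ θ (x c)))
        (fun c _ => (Real.exp_pos _).le) (Finset.mem_univ b)

theorem tendsto_sum_exp_inner_cocompact [ProperSpace E] {ι : Type*} [Fintype ι] (x : ι → E)
    (h0 : (0 : E) ∈ interior (convexHull ℝ (Set.range x))) :
    Tendsto (fun θ => ∑ b, Real.exp (inner ℝ θ (x b))) (cocompact E) atTop := by
  obtain ⟨ε, hε, hbound⟩ := exists_exp_mul_norm_le_sum_exp_inner x h0
  exact tendsto_atTop_mono hbound <|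
    Real.tendsto_exp_atTop.comp (tendsto_norm_cocompact_atTop.const_mul_atTop hε)

end Coercivity

theorem approximate_MLE_exists_general (d B : ℕ)
    (x : Fin B → EuclideanSpace ℝ (Fin d))
    (h0 : (0 : EuclideanSpace ℝ (Fin d)) ∈
      interior (convexHull ℝ (Set.range x))) :
    (∃ θmin : EuclideanSpace ℝ (Fin d), ∀ θ : EuclideanSpace ℝ (Fin d),
        (∑ b : Fin B, Real.exp (inner ℝ θmin (x b))) ≤
          ∑ b : Fin B, Real.exp (inner ℝ θ (x b))) ∧
      ∃ θmax : EuclideanSpace ℝ (Fin d), ∀ θ : EuclideanSpace ℝ (Fin d),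
        -Real.log (∑ b : Fin B, Real.exp (inner ℝ θ (x b))) ≤
          -Real.log (∑ b : Fin B, Real.exp (inner ℝ θmax (x b))) := by
  have hcont : Continuous fun θ : EuclideanSpace ℝ (Fin d) => ∑ b, Real.exp (inner ℝ θ (x b)) :=
    continuous_finsetSum _ fun b _ => (continuous_id.inner continuous_const).rexp
  obtain ⟨θmin, hmin⟩ := hcont.exists_forall_le (tendsto_sum_exp_inner_cocompact x h0)
  obtain ⟨ε, -, hbound⟩ := exists_exp_mul_norm_le_sum_exp_inner x h0
  refine ⟨⟨θmin, hmin⟩, θmin, fun θ => neg_le_neg ?_⟩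
  exact Real.log_le_log ((Real.exp_pos _).trans_le (hbound θmin)) (hmin θ)

/-- Existence of the approximate MLE: if `0` lies in the interior of the convex hull
of the change statistics `x 1, …, x B ⊆ ℝ^d`, then `f(θ) = Σ_b exp⟨θ, x b⟩` attains a
global minimum, equivalently the estimated log-likelihood `θ ↦ −log f(θ)` attains a
global maximum. -/
theorem approximate_MLE_exists (d B : ℕ) (hd : 1 ≤ d)
    (x : Fin B → EuclideanSpace ℝ (Fin d))
    (h0 : (0 : EuclideanSpace ℝ (Fin d)) ∈
      interior (convexHull ℝ (Set.range x))) :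
    (∃ θmin : EuclideanSpace ℝ (Fin d), ∀ θ : EuclideanSpace ℝ (Fin d),
        (∑ b : Fin B, Real.exp (inner ℝ θmin (x b))) ≤
          ∑ b : Fin B, Real.exp (inner ℝ θ (x b))) ∧
      ∃ θmax : EuclideanSpace ℝ (Fin d), ∀ θ : EuclideanSpace ℝ (Fin d),
        -Real.log (∑ b : Fin B, Real.exp (inner ℝ θ (x b))) ≤
          -Real.log (∑ b : Fin B, Real.exp (inner ℝ θmax (x b))) :=
  approximate_MLE_exists_general d B x h0
end
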